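/- Let α ∈ (1,2), β ∈ [−1,1], D > 0, and define F(x) = D(1 − β sgn(x))|x|^{α-1}. Then for every ε ∈ (0, min(α−1, 2−α)) there is a constant C (depending on D, α, β, ε) such that for all x ≠ 0 and all y ∈ ℝ, |F(x+y) − F(x)|² ≤ C · min(|x|^{α−ε−2}|y|^{α+ε}, |y|^{2α−2}). -/

import Mathlib

/-- The left-continuous sign function: `1` for `x > 0` and `-1` for `x ≤ 0`. -/
noncomputable def sgn (x : ℝ) : ℝ := if 0 < x then 1 else -1

/-!
Write `p = α - 1`, `q = (α + ε) / 2` (so `0 < p ≤ q ≤ 1`) and `y = t x`. By homogeneity,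
`F (x + y) - F x = D |x|^p ((|1 + t|^p - 1) - β sgn x (sgn (1 + t) |1 + t|^p - 1))`,
and both brackets are `O(min (|t|^q, |t|^p))`: for `|t| ≤ 1` they are bounded by `|t| ≤ |t|^q`,
for `|t| ≥ 1` by the `p`-Hölder continuity of `|·|^p`. Undoing the scaling,
`|x|^p min (|t|^q, |t|^p) = min (|x|^(p-q) |y|^q, |y|^p)`, and squaring gives the claim with
`C = D² (1 + 2|β|)²`.
-/

open Real

lemma abs_sgn (x : ℝ) : |sgn x| = 1 := by
  unfold sgn; split_ifs <;> norm_num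

lemma sgn_mul {x s : ℝ} (hx : x ≠ 0) (hs : s ≠ 0) : sgn (x * s) = sgn x * sgn s := by
  unfold sgn
  rcases hx.lt_or_gt with hx | hx <;> rcases hs.lt_or_gt with hs | hs
  · simp [mul_pos_of_neg_of_neg hx hs, hx.not_gt, hs.not_gt]
  · simp [mul_neg_of_neg_of_pos hx hs |>.not_gt, hx.not_gt, hs]
  · simp [mul_neg_of_pos_of_neg hx hs |>.not_gt, hx, hs.not_gt]
  · simp [mul_pos hx hs, hx, hs]

lemma sgn_mul_abs_mul_rpow {p : ℝ} (hp : p ≠ 0) {x : ℝ} (hx : x ≠ 0) (s : ℝ) :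
    sgn (x * s) * |x * s| ^ p = sgn x * |x| ^ p * (sgn s * |s| ^ p) := by
  rcases eq_or_ne s 0 with rfl | hs
  · simp [zero_rpow hp]
  rw [sgn_mul hx hs, abs_mul, mul_rpow (abs_nonneg x) (abs_nonneg s)]
  ring

lemma abs_rpow_sub_one_le_abs_sub_one {s p : ℝ} (hs : 0 ≤ s) (hp0 : 0 ≤ p) (hp1 : p ≤ 1) :
    |s ^ p - 1| ≤ |s - 1| := by
  rcases le_total 1 s with h | h
  · have := one_le_rpow h hp0
    have := rpow_le_self_of_one_le h hp1
    rw [abs_of_nonneg (by linarith), abs_of_nonneg (by linarith)]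
    linarith
  · have := self_le_rpow_of_le_one hs h hp1
    have := rpow_le_one hs h hp0
    rw [abs_of_nonpos (by linarith), abs_of_nonpos (by linarith)]
    linarith

lemma abs_abs_rpow_sub_abs_rpow_le {p : ℝ} (hp0 : 0 ≤ p) (hp1 : p ≤ 1) (a b : ℝ) :
    |(|a|) ^ p - |b| ^ p| ≤ |a - b| ^ p := by
  have key : ∀ a b : ℝ, |a| ^ p ≤ |a - b| ^ p + |b| ^ p := fun a b =>
    calc |a| ^ p ≤ (|a - b| + |b|) ^ p := by
          gcongr
          linarith [abs_sub_abs_le_abs_sub a b]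
      _ ≤ |a - b| ^ p + |b| ^ p := rpow_add_le_add_rpow (abs_nonneg _) (abs_nonneg _) hp0 hp1
  rw [abs_sub_le_iff]
  constructor
  · linarith [key a b]
  · rw [abs_sub_comm a b]; linarith [key b a]

section

variable {p q : ℝ} (hp : 0 ≤ p) (hpq : p ≤ q) (hq : q ≤ 1)
include hp hpq hq

lemma abs_abs_one_add_rpow_sub_one_le (t : ℝ) :
    |(|1 + t|) ^ p - 1| ≤ min (|t| ^ q) (|t| ^ p) := by
  have holder : |(|1 + t|) ^ p - 1| ≤ |t| ^ p := by
    simpa using abs_abs_rpow_sub_abs_rpow_le hp (hpq.trans hq) (1 + t) 1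
  refine le_min ?_ holder
  rcases le_total |t| 1 with ht | ht
  · have h1t : 0 ≤ 1 + t := by linarith [neg_abs_le t]
    calc |(|1 + t|) ^ p - 1| ≤ |1 + t - 1| := by
          rw [abs_of_nonneg h1t]
          exact abs_rpow_sub_one_le_abs_sub_one h1t hp (hpq.trans hq)
      _ = |t| := by rw [add_sub_cancel_left]
      _ ≤ |t| ^ q := self_le_rpow_of_le_one (abs_nonneg t) ht hq
  · exact holder.trans (rpow_le_rpow_of_exponent_le ht hpq)

lemma abs_sgn_mul_abs_one_add_rpow_sub_one_le (t : ℝ) :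
    |sgn (1 + t) * |1 + t| ^ p - 1| ≤ 2 * min (|t| ^ q) (|t| ^ p) := by
  by_cases h : 0 < 1 + t
  · rw [sgn, if_pos h, one_mul]
    have := abs_abs_one_add_rpow_sub_one_le hp hpq hq t
    have : 0 ≤ min (|t| ^ q) (|t| ^ p) := le_min (by positivity) (by positivity)
    linarith
  · have ht : 1 ≤ |t| := by rw [abs_of_neg (by linarith : t < 0)]; linarith
    have h1 : |1 + t| ^ p ≤ |t| ^ p := by
      refine rpow_le_rpow (abs_nonneg _) ?_ hp
      rw [abs_of_nonpos (by linarith), abs_of_neg (by linarith)]; linarith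
    have h2 : 1 ≤ |t| ^ p := one_le_rpow ht hp
    have h3 : 0 ≤ |1 + t| ^ p := by positivity
    rw [min_eq_right (rpow_le_rpow_of_exponent_le ht hpq), sgn, if_neg h,
      abs_of_nonpos (by linarith : -1 * |1 + t| ^ p - 1 ≤ 0)]
    linarith

end

lemma abs_sub_le_rpow_mul_min {p q : ℝ} (hp : 0 < p) (hpq : p ≤ q) (hq : q ≤ 1) (D β : ℝ)
    {x : ℝ} (hx : x ≠ 0) (y : ℝ) :
    |D * (1 - β * sgn (x + y)) * |x + y| ^ p - D * (1 - β * sgn x) * |x| ^ p| ≤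
      |D| * (1 + 2 * |β|) * (|x| ^ p * min (|y / x| ^ q) (|y / x| ^ p)) := by
  set t := y / x
  set m := min (|t| ^ q) (|t| ^ p)
  have hxy : x + y = x * (1 + t) := by rw [mul_add, mul_one, mul_div_cancel₀ y hx]
  have hu := abs_abs_one_add_rpow_sub_one_le hp.le hpq hq t
  have hs := abs_sgn_mul_abs_one_add_rpow_sub_one_le hp.le hpq hq t
  have h1 : |x + y| ^ p = |x| ^ p * |1 + t| ^ p := by
    rw [hxy, abs_mul, mul_rpow (abs_nonneg x) (abs_nonneg _)]
  have h2 : sgn (x + y) * |x + y| ^ p = sgn x * |x| ^ p * (sgn (1 + t) * |1 + t| ^ p) := by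
    rw [hxy, sgn_mul_abs_mul_rpow hp.ne' hx]
  have hfactor : D * (1 - β * sgn (x + y)) * |x + y| ^ p - D * (1 - β * sgn x) * |x| ^ p =
      D * |x| ^ p * ((|1 + t| ^ p - 1) - β * sgn x * (sgn (1 + t) * |1 + t| ^ p - 1)) := by
    linear_combination D * h1 - D * β * h2
  rw [hfactor, abs_mul, abs_mul, abs_of_nonneg (by positivity : 0 ≤ |x| ^ p)]
  calc |D| * |x| ^ p * |(|1 + t|) ^ p - 1 - β * sgn x * (sgn (1 + t) * |1 + t| ^ p - 1)|
      ≤ |D| * |x| ^ p * (m + |β| * (2 * m)) := by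
        gcongr
        refine (abs_sub _ _).trans ?_
        rw [abs_mul, abs_mul, abs_sgn, mul_one]
        gcongr
    _ = |D| * (1 + 2 * |β|) * (|x| ^ p * m) := by ring

lemma rpow_mul_min_rpow_div {p q x : ℝ} (hx : x ≠ 0) (y : ℝ) :
    |x| ^ p * min (|y / x| ^ q) (|y / x| ^ p) = min (|x| ^ (p - q) * |y| ^ q) (|y| ^ p) := by
  have hx' : 0 < |x| := abs_pos.2 hx
  rw [mul_min_of_nonneg _ _ (by positivity), abs_div, div_rpow (abs_nonneg y) hx'.le,
    div_rpow (abs_nonneg y) hx'.le, rpow_sub hx']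
  field_simp

lemma min_pow_of_nonneg {a b : ℝ} (ha : 0 ≤ a) (hb : 0 ≤ b) (n : ℕ) :
    min a b ^ n = min (a ^ n) (b ^ n) := by
  rcases le_total a b with h | h
  · rw [min_eq_left h, min_eq_left (pow_le_pow_left₀ ha h n)]
  · rw [min_eq_right h, min_eq_right (pow_le_pow_left₀ hb h n)]

theorem stmt9_general (α β D : ℝ) (F : ℝ → ℝ) (hF : ∀ x, F x = D * (1 - β * sgn x) * |x| ^ (α - 1))
    (ε : ℝ) (hε0 : 0 < ε) (hε : ε < min (α - 1) (2 - α)) :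
    ∃ C : ℝ, ∀ x : ℝ, x ≠ 0 → ∀ y : ℝ,
      |F (x + y) - F x| ^ 2 ≤ C * min (|x| ^ (α - ε - 2) * |y| ^ (α + ε)) (|y| ^ (2 * α - 2)) := by
  obtain ⟨hε1, hε2⟩ := lt_min_iff.1 hε
  refine ⟨(|D| * (1 + 2 * |β|)) ^ 2, fun x hx y => ?_⟩
  have hΔ := abs_sub_le_rpow_mul_min (p := α - 1) (q := (α + ε) / 2)
    (by linarith) (by linarith) (by linarith) D β hx y
  rw [rpow_mul_min_rpow_div hx] at hΔ
  have hsq : ∀ {a : ℝ} (r : ℝ), 0 ≤ a → (a ^ r) ^ 2 = a ^ (2 * r) := fun r ha => by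
    rw [mul_comm]; exact_mod_cast (rpow_mul_natCast ha r 2).symm
  calc |F (x + y) - F x| ^ 2
      ≤ (|D| * (1 + 2 * |β|)) ^ 2 *
          min (|x| ^ (α - 1 - (α + ε) / 2) * |y| ^ ((α + ε) / 2)) (|y| ^ (α - 1)) ^ 2 := by
        rw [← mul_pow, hF, hF]
        exact pow_le_pow_left₀ (abs_nonneg _) hΔ 2
    _ = _ := by
        rw [min_pow_of_nonneg (by positivity) (by positivity), mul_pow (|x| ^ _),
          hsq _ (abs_nonneg x), hsq _ (abs_nonneg y), hsq _ (abs_nonneg y)]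
        ring_nf

theorem stmt9 (α β D : ℝ) (hα1 : 1 < α) (hα2 : α < 2) (hβ1 : -1 ≤ β) (hβ2 : β ≤ 1)
    (hD : 0 < D) (F : ℝ → ℝ) (hF : ∀ x, F x = D * (1 - β * sgn x) * |x| ^ (α - 1))
    (ε : ℝ) (hε0 : 0 < ε) (hε : ε < min (α - 1) (2 - α)) :
    ∃ C : ℝ, ∀ x : ℝ, x ≠ 0 → ∀ y : ℝ,
      |F (x + y) - F x| ^ 2 ≤ C * min (|x| ^ (α - ε - 2) * |y| ^ (α + ε)) (|y| ^ (2 * α - 2)) :=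
  stmt9_general α β D F hF ε hε0 hε
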